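/- One-form reduction identity: let θ, i : ℝ → ℝ and x̄, ȳ : ℝ → ℝ³ be C¹, and set x(t) = R₃(θ(t))R₁(i(t))x̄(t), y(t) = R₃(θ(t))R₁(i(t))ȳ(t), C = x × y, C̄ = x̄ × ȳ. Then for all t: y(t)·x'(t) = (C(t)·k³)·θ'(t) + (C̄(t)·k¹)·i'(t) + ȳ(t)·x̄'(t), where k¹ = (1,0,0), k³ = (0,0,1). -/

import Mathlib

/-!
Write `R = R₃(θ) R₁(i)`. Both factors are rotations, and differentiating them gives
`R₃(θ)' v = θ' R₃(θ) (k³ × v)` and `R₁(i)' v = i' R₁(i) (k¹ × v)`. Since `R` preserves the dot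
product, `y · x' = ȳ · Rᵀ x'` splits into `ȳ · x̄'` plus the two terms
`θ' (R₁ȳ) · (k³ × R₁x̄)` and `i' ȳ · (k¹ × x̄)`. The triple-product identity turns these into
`θ' k³ · (R₁x̄ × R₁ȳ)` and `i' k¹ · C̄`; finally `R₃` commutes with cross products and fixes the
third coordinate, so `k³ · (R₁x̄ × R₁ȳ) = k³ · C`.
-/

open Matrix

/-- Rotation about the first axis by angle `i`. -/
noncomputable def rotOne (i : ℝ) : Matrix (Fin 3) (Fin 3) ℝ :=
  !![1, 0, 0; 0, Real.cos i, -Real.sin i; 0, Real.sin i, Real.cos i]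

/-- Rotation about the third axis by angle `θ`. -/
noncomputable def rotThree (θ : ℝ) : Matrix (Fin 3) (Fin 3) ℝ :=
  !![Real.cos θ, -Real.sin θ, 0; Real.sin θ, Real.cos θ, 0; 0, 0, 1]

open Real

lemma rotThree_mulVec (a : ℝ) (v : Fin 3 → ℝ) :
    rotThree a *ᵥ v = ![cos a * v 0 - sin a * v 1, sin a * v 0 + cos a * v 1, v 2] := by
  ext j
  fin_cases j <;>
    simp only [rotThree, mulVec, vec3_dotProduct, of_apply, cons_val_zero, cons_val_one,
      cons_val_two, head_cons, tail_cons, Fin.isValue, Fin.zero_eta, Fin.mk_one,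
      Fin.reduceFinMk] <;>
    ring

lemma rotOne_mulVec (a : ℝ) (v : Fin 3 → ℝ) :
    rotOne a *ᵥ v = ![v 0, cos a * v 1 - sin a * v 2, sin a * v 1 + cos a * v 2] := by
  ext j
  fin_cases j <;>
    simp only [rotOne, mulVec, vec3_dotProduct, of_apply, cons_val_zero, cons_val_one,
      cons_val_two, head_cons, tail_cons, Fin.isValue, Fin.zero_eta, Fin.mk_one,
      Fin.reduceFinMk] <;>
    ring

lemma rotThree_mulVec_apply_two (a : ℝ) (v : Fin 3 → ℝ) : (rotThree a *ᵥ v) 2 = v 2 := by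
  rw [rotThree_mulVec, cons_val_two, tail_cons, head_cons]

lemma dotProduct_rotThree_mulVec (a : ℝ) (u v : Fin 3 → ℝ) :
    rotThree a *ᵥ u ⬝ᵥ rotThree a *ᵥ v = u ⬝ᵥ v := by
  simp only [rotThree_mulVec, vec3_dotProduct, cons_val_zero, cons_val_one, cons_val_two,
    head_cons, tail_cons]
  linear_combination (u 0 * v 0 + u 1 * v 1) * sin_sq_add_cos_sq a

lemma dotProduct_rotOne_mulVec (a : ℝ) (u v : Fin 3 → ℝ) :
    rotOne a *ᵥ u ⬝ᵥ rotOne a *ᵥ v = u ⬝ᵥ v := by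
  simp only [rotOne_mulVec, vec3_dotProduct, cons_val_zero, cons_val_one, cons_val_two,
    head_cons, tail_cons]
  linear_combination (u 1 * v 1 + u 2 * v 2) * sin_sq_add_cos_sq a

lemma cross_rotThree_mulVec (a : ℝ) (u v : Fin 3 → ℝ) :
    (rotThree a *ᵥ u) ⨯₃ (rotThree a *ᵥ v) = rotThree a *ᵥ (u ⨯₃ v) := by
  ext j
  fin_cases j <;>
    simp only [rotThree_mulVec, cross_apply, cons_val_zero, cons_val_one, cons_val_two,
      head_cons, tail_cons, Fin.isValue, Fin.zero_eta, Fin.mk_one, Fin.reduceFinMk]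
  · ring
  · ring
  · linear_combination (u 0 * v 1 - u 1 * v 0) * sin_sq_add_cos_sq a

section Derivatives

variable {φ : ℝ → ℝ} {v : ℝ → Fin 3 → ℝ} {φ' t : ℝ} {v' : Fin 3 → ℝ}

lemma hasDerivAt_rotThree_mulVec (hφ : HasDerivAt φ φ' t) (hv : HasDerivAt v v' t) :
    HasDerivAt (fun s ↦ rotThree (φ s) *ᵥ v s)
      (rotThree (φ t) *ᵥ (φ' • ![0, 0, 1] ⨯₃ v t + v')) t := by
  simp only [rotThree_mulVec]
  have hv := hasDerivAt_pi.mp hv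
  refine hasDerivAt_pi.mpr fun j ↦ ?_
  fin_cases j
  · refine ((hφ.cos.mul (hv 0)).sub (hφ.sin.mul (hv 1))).congr_deriv ?_
    simp only [cross_apply, Pi.add_apply, Pi.smul_apply, smul_eq_mul, cons_val_zero,
      cons_val_one, cons_val_two, head_cons, tail_cons, Fin.isValue, Fin.zero_eta]
    ring
  · refine ((hφ.sin.mul (hv 0)).add (hφ.cos.mul (hv 1))).congr_deriv ?_
    simp only [cross_apply, Pi.add_apply, Pi.smul_apply, smul_eq_mul, cons_val_zero,
      cons_val_one, cons_val_two, head_cons, tail_cons, Fin.isValue, Fin.mk_one]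
    ring
  · simpa [cross_apply] using hv 2

lemma hasDerivAt_rotOne_mulVec (hφ : HasDerivAt φ φ' t) (hv : HasDerivAt v v' t) :
    HasDerivAt (fun s ↦ rotOne (φ s) *ᵥ v s)
      (rotOne (φ t) *ᵥ (φ' • ![1, 0, 0] ⨯₃ v t + v')) t := by
  simp only [rotOne_mulVec]
  have hv := hasDerivAt_pi.mp hv
  refine hasDerivAt_pi.mpr fun j ↦ ?_
  fin_cases j
  · simpa [cross_apply] using hv 0
  · refine ((hφ.cos.mul (hv 1)).sub (hφ.sin.mul (hv 2))).congr_deriv ?_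
    simp only [cross_apply, Pi.add_apply, Pi.smul_apply, smul_eq_mul, cons_val_zero,
      cons_val_one, cons_val_two, head_cons, tail_cons, Fin.isValue, Fin.mk_one]
    ring
  · refine ((hφ.sin.mul (hv 1)).add (hφ.cos.mul (hv 2))).congr_deriv ?_
    simp only [cross_apply, Pi.add_apply, Pi.smul_apply, smul_eq_mul, cons_val_zero,
      cons_val_one, cons_val_two, head_cons, tail_cons, Fin.isValue, Fin.reduceFinMk]
    ring

end Derivatives

theorem one_form_reduction_general
    (θ i : ℝ → ℝ) (xb yb : ℝ → Fin 3 → ℝ)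
    (hθ : Differentiable ℝ θ) (hi : Differentiable ℝ i)
    (hxb : Differentiable ℝ xb)
    (x y C Cb : ℝ → Fin 3 → ℝ)
    (hx : ∀ t, x t = (rotThree (θ t) * rotOne (i t)).mulVec (xb t))
    (hy : ∀ t, y t = (rotThree (θ t) * rotOne (i t)).mulVec (yb t))
    (hC : ∀ t, C t = crossProduct (x t) (y t))
    (hCb : ∀ t, Cb t = crossProduct (xb t) (yb t)) :
    ∀ t, y t ⬝ᵥ deriv x t
      = (C t ⬝ᵥ ![0, 0, 1]) * deriv θ t + (Cb t ⬝ᵥ ![1, 0, 0]) * deriv i t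
        + yb t ⬝ᵥ deriv xb t := by
  intro t
  have hx_fun : x = fun s ↦ rotThree (θ s) *ᵥ (rotOne (i s) *ᵥ xb s) :=
    funext fun s ↦ by rw [hx s, mulVec_mulVec]
  have hderiv : deriv x t = rotThree (θ t) *ᵥ (deriv θ t • ![0, 0, 1] ⨯₃ (rotOne (i t) *ᵥ xb t)
      + rotOne (i t) *ᵥ (deriv i t • ![1, 0, 0] ⨯₃ xb t + deriv xb t)) := by
    rw [hx_fun]
    exact (hasDerivAt_rotThree_mulVec (hθ t).hasDerivAt
      (hasDerivAt_rotOne_mulVec (hi t).hasDerivAt (hxb t).hasDerivAt)).deriv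
  have hθ_term : rotOne (i t) *ᵥ yb t ⬝ᵥ ![0, 0, 1] ⨯₃ (rotOne (i t) *ᵥ xb t)
      = C t ⬝ᵥ ![0, 0, 1] := by
    rw [triple_product_permutation, hC, hx, hy, ← mulVec_mulVec, ← mulVec_mulVec,
      cross_rotThree_mulVec, dotProduct_comm, dotProduct_comm _ ![0, 0, 1]]
    rw [vec3_dotProduct, vec3_dotProduct, rotThree_mulVec_apply_two]
    simp
  have hi_term : yb t ⬝ᵥ ![1, 0, 0] ⨯₃ xb t = Cb t ⬝ᵥ ![1, 0, 0] := by
    rw [triple_product_permutation, hCb, dotProduct_comm]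
  rw [hderiv, hy, ← mulVec_mulVec, dotProduct_rotThree_mulVec, dotProduct_add,
    dotProduct_rotOne_mulVec, dotProduct_add, dotProduct_smul, dotProduct_smul, hθ_term, hi_term,
    smul_eq_mul, smul_eq_mul]
  ring

/-- One-form reduction identity: with `x = R₃(θ)R₁(i)x̄`, `y = R₃(θ)R₁(i)ȳ`, `C = x × y`,
`C̄ = x̄ × ȳ`, one has `y·x' = (C·k³)θ' + (C̄·k¹)i' + ȳ·x̄'`. -/
theorem one_form_reduction
    (θ i : ℝ → ℝ) (xb yb : ℝ → Fin 3 → ℝ)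
    (hθ : Differentiable ℝ θ) (hi : Differentiable ℝ i)
    (hxb : Differentiable ℝ xb) (hyb : Differentiable ℝ yb)
    (x y C Cb : ℝ → Fin 3 → ℝ)
    (hx : ∀ t, x t = (rotThree (θ t) * rotOne (i t)).mulVec (xb t))
    (hy : ∀ t, y t = (rotThree (θ t) * rotOne (i t)).mulVec (yb t))
    (hC : ∀ t, C t = crossProduct (x t) (y t))
    (hCb : ∀ t, Cb t = crossProduct (xb t) (yb t)) :
    ∀ t, y t ⬝ᵥ deriv x t
      = (C t ⬝ᵥ ![0, 0, 1]) * deriv θ t + (Cb t ⬝ᵥ ![1, 0, 0]) * deriv i t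
        + yb t ⬝ᵥ deriv xb t :=
  one_form_reduction_general θ i xb yb hθ hi hxb x y C Cb hx hy hC hCb
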